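/- (No critical point in the disk forces inseparable reduction.) Let k be an algebraically closed field that is complete with respect to a nontrivial non-Archimedean absolute value |·|. Let m ≥ 1 and s ≥ 0 be integers with m + s ≥ 2, and let f, g ∈ k[X] be polynomials all of whose coefficients have absolute value ≤ 1, satisfying: |f.coeff i| < 1 for all i < m + s and |f.coeff (m+s)| = 1; |g.coeff j| < 1 for all j < s and |g.coeff s| = 1. If the Wronskian W = f'·g − f·g' has no root x ∈ k with |x| < 1, then the image of m in k has absolute value < 1 (so the residue characteristic p satisfies 0 < p and p divides m, whence p ≤ m + s), and every coefficient of W has absolute value < 1 (i.e., the reduction of the Wronskian is the zero polynomial). -/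

import Mathlib

/-!
Since `m + s ≥ 2`, both `f(0)` and `f'(0)` are small, so `|W(0)| < 1`. The roots of `W` all lie
outside the open unit disk, so by Vieta's formulas no coefficient of `W` is larger than `W(0)`:
the reduction of `W` vanishes. On the other hand, modulo the maximal ideal the coefficient of
`X ^ (m + 2s - 1)` in `W` is `(m + s) f_{m+s} g_s - s f_{m+s} g_s = m f_{m+s} g_s`, and
`f_{m+s} g_s` is a unit, so `|m| < 1`.
-/

open Polynomial Finset

section Ultrametric

lemma IsUltrametricDist.norm_sum_lt_of_forall_lt {M ι : Type*} [SeminormedAddCommGroup M]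
    [IsUltrametricDist M] {s : Finset ι} {F : ι → M} {C : ℝ} (hC : 0 < C)
    (h : ∀ i ∈ s, ‖F i‖ < C) : ‖∑ i ∈ s, F i‖ < C := by
  rcases s.eq_empty_or_nonempty with rfl | hs
  · simpa using hC
  obtain ⟨i, hi, hle⟩ := exists_norm_finsetSum_le_of_nonempty hs F
  exact hle.trans_lt (h i hi)

lemma IsUltrametricDist.norm_sum_sub_lt_of_forall_ne {M ι : Type*} [SeminormedAddCommGroup M]
    [IsUltrametricDist M] {s : Finset ι} {F : ι → M} {C : ℝ} {j : ι} (hC : 0 < C) (hj : j ∈ s)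
    (h : ∀ i ∈ s, i ≠ j → ‖F i‖ < C) : ‖∑ i ∈ s, F i - F j‖ < C := by
  classical
  rw [← add_sum_erase s F hj, add_sub_cancel_left]
  exact norm_sum_lt_of_forall_lt hC fun i hi => h i (mem_of_mem_erase hi) (ne_of_mem_erase hi)

lemma IsUltrametricDist.norm_lt_of_norm_sub_lt {M : Type*} [SeminormedAddCommGroup M]
    [IsUltrametricDist M] {x y : M} {C : ℝ} (hx : ‖x‖ < C) (hxy : ‖x - y‖ < C) : ‖y‖ < C := by
  calc ‖y‖ = dist y 0 := (dist_zero_right y).symm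
    _ ≤ max (dist y x) (dist x 0) := dist_triangle_max y x 0
    _ < C := by rw [dist_comm, dist_eq_norm, dist_zero_right]; exact max_lt hxy hx

variable {k : Type*} [NormedField k]

lemma Multiset.one_le_norm_prod {s : Multiset k} (hs : ∀ x ∈ s, 1 ≤ ‖x‖) : 1 ≤ ‖s.prod‖ := by
  induction s using Multiset.induction_on with
  | empty => simp
  | cons a t ih =>
    rw [Multiset.prod_cons, norm_mul]
    exact one_le_mul_of_one_le_of_one_le (hs a (Multiset.mem_cons_self a t))
      (ih fun x hx => hs x (Multiset.mem_cons_of_mem hx))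

variable [IsUltrametricDist k]

lemma IsUltrametricDist.norm_natCast_sub_mul_mul_lt_one (a b : ℕ) {x y : k} (hx : ‖x‖ ≤ 1)
    (hy : ‖y‖ ≤ 1) (h : ‖x‖ < 1 ∨ ‖y‖ < 1) : ‖((a : k) - b) * x * y‖ < 1 := by
  have hab : ‖(a : k) - b‖ ≤ 1 := by
    simpa using norm_intCast_le_one k ((a : ℤ) - b)
  have hxy : ‖x‖ * ‖y‖ < 1 := by
    rcases h with h | h
    · exact mul_lt_one_of_nonneg_of_lt_one_left (norm_nonneg x) h hy
    · exact mul_lt_one_of_nonneg_of_lt_one_right hx (norm_nonneg y) h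
  calc ‖((a : k) - b) * x * y‖ = ‖(a : k) - b‖ * (‖x‖ * ‖y‖) := by
        rw [norm_mul, norm_mul, mul_assoc]
    _ ≤ ‖x‖ * ‖y‖ := mul_le_of_le_one_left (by positivity) hab
    _ < 1 := hxy

lemma Multiset.norm_esymm_le_norm_prod {s : Multiset k} (hs : ∀ x ∈ s, 1 ≤ ‖x‖) (j : ℕ) :
    ‖s.esymm j‖ ≤ ‖s.prod‖ := by
  rcases eq_or_ne (s.powersetCard j) 0 with h0 | hne
  · simp [Multiset.esymm, h0]
  obtain ⟨t, ht, hle⟩ :=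
    IsUltrametricDist.exists_norm_multiset_sum_le (s.powersetCard j) (f := Multiset.prod)
  obtain ⟨u, rfl⟩ := Multiset.le_iff_exists_add.mp (Multiset.mem_powersetCard.mp (ht hne)).1
  refine hle.trans ?_
  rw [Multiset.prod_add, norm_mul]
  exact le_mul_of_one_le_right (norm_nonneg _)
    (one_le_norm_prod fun x hx => hs x (Multiset.mem_add.mpr (Or.inr hx)))

lemma Polynomial.norm_coeff_le_norm_coeff_zero {p : k[X]} (hsplit : p.Splits)
    (hroots : ∀ x ∈ p.roots, 1 ≤ ‖x‖) (i : ℕ) : ‖p.coeff i‖ ≤ ‖p.coeff 0‖ := by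
  rcases le_or_gt i p.natDegree with hi | hi
  · rw [coeff_eq_esymm_roots_of_splits hsplit hi, hsplit.coeff_zero_eq_leadingCoeff_mul_prod_roots]
    simp only [norm_mul, norm_pow, norm_neg, norm_one, one_pow, one_mul, mul_one]
    exact mul_le_mul_of_nonneg_left (Multiset.norm_esymm_le_norm_prod hroots _) (norm_nonneg _)
  · simp [coeff_eq_zero_of_natDegree_lt hi]

end Ultrametric

lemma Polynomial.coeff_derivative_mul_sub_mul_derivative {R : Type*} [CommRing R] (f g : R[X])
    (n : ℕ) : (derivative f * g - f * derivative g).coeff n =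
      ∑ p ∈ antidiagonal (n + 1), ((p.1 : R) - p.2) * f.coeff p.1 * g.coeff p.2 := by
  simp only [sub_mul, sum_sub_distrib]
  rw [Nat.sum_antidiagonal_succ, Nat.sum_antidiagonal_succ', coeff_sub, coeff_mul, coeff_mul]
  simp only [coeff_derivative, Nat.cast_zero, zero_mul, zero_add, Nat.cast_add, Nat.cast_one]
  congr 1 <;> refine sum_congr rfl fun p _ => by ring

section Wronskian

variable {k : Type*} [NormedField k] [IsUltrametricDist k] {f g : k[X]}

lemma norm_coeff_derivative_mul_sub_mul_derivative_lt_one {N n : ℕ}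
    (hf1 : ∀ i, ‖f.coeff i‖ ≤ 1) (hg1 : ∀ j, ‖g.coeff j‖ ≤ 1)
    (hfsmall : ∀ i < N, ‖f.coeff i‖ < 1) (hn : n + 1 < N) :
    ‖(derivative f * g - f * derivative g).coeff n‖ < 1 := by
  rw [coeff_derivative_mul_sub_mul_derivative]
  refine IsUltrametricDist.norm_sum_lt_of_forall_lt one_pos fun p hp =>
    IsUltrametricDist.norm_natCast_sub_mul_mul_lt_one _ _ (hf1 _) (hg1 _) (Or.inl (hfsmall _ ?_))
  rw [HasAntidiagonal.mem_antidiagonal] at hp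
  omega

lemma norm_coeff_derivative_mul_sub_mul_derivative_sub_lt_one {a b n : ℕ}
    (hf1 : ∀ i, ‖f.coeff i‖ ≤ 1) (hg1 : ∀ j, ‖g.coeff j‖ ≤ 1)
    (hfsmall : ∀ i < a, ‖f.coeff i‖ < 1) (hgsmall : ∀ j < b, ‖g.coeff j‖ < 1)
    (hn : n + 1 = a + b) :
    ‖(derivative f * g - f * derivative g).coeff n - ((a : k) - b) * f.coeff a * g.coeff b‖
      < 1 := by
  have hab : (a, b) ∈ antidiagonal (n + 1) := by rwa [HasAntidiagonal.mem_antidiagonal, eq_comm]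
  rw [coeff_derivative_mul_sub_mul_derivative]
  refine IsUltrametricDist.norm_sum_sub_lt_of_forall_ne one_pos hab fun ⟨i, j⟩ hp hne =>
    IsUltrametricDist.norm_natCast_sub_mul_mul_lt_one _ _ (hf1 _) (hg1 _) ?_
  rw [HasAntidiagonal.mem_antidiagonal] at hp
  simp only [ne_eq, Prod.mk.injEq] at hne
  by_cases hi : i < a
  · exact Or.inl (hfsmall i hi)
  · exact Or.inr (hgsmall j (by omega))

end Wronskian

theorem no_critical_point_inseparable_reduction_general {k : Type*} [NontriviallyNormedField k]
    [IsAlgClosed k] [IsUltrametricDist k]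
    (m s : ℕ) (hms : 2 ≤ m + s) (f g : k[X])
    (hf1 : ∀ i, ‖f.coeff i‖ ≤ 1) (hg1 : ∀ j, ‖g.coeff j‖ ≤ 1)
    (hfsmall : ∀ i < m + s, ‖f.coeff i‖ < 1) (hftop : ‖f.coeff (m + s)‖ = 1)
    (hgsmall : ∀ j < s, ‖g.coeff j‖ < 1) (hgtop : ‖g.coeff s‖ = 1)
    (hnoroot : ∀ x : k, ‖x‖ < 1 → ¬(derivative f * g - f * derivative g).IsRoot x) :
    ‖(m : k)‖ < 1 ∧ ∀ i, ‖(derivative f * g - f * derivative g).coeff i‖ < 1 := by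
  set W := derivative f * g - f * derivative g
  have hW0 : ‖W.coeff 0‖ < 1 :=
    norm_coeff_derivative_mul_sub_mul_derivative_lt_one hf1 hg1 hfsmall (by omega)
  have hroots : ∀ x ∈ W.roots, 1 ≤ ‖x‖ := fun x hx =>
    not_lt.mp fun hx1 => hnoroot x hx1 (isRoot_of_mem_roots hx)
  have hW : ∀ i, ‖W.coeff i‖ < 1 := fun i =>
    (norm_coeff_le_norm_coeff_zero (IsAlgClosed.splits W) hroots i).trans_lt hW0
  refine ⟨?_, hW⟩
  have hWtop := norm_coeff_derivative_mul_sub_mul_derivative_sub_lt_one (n := m + 2 * s - 1)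
    hf1 hg1 hfsmall hgsmall (by omega)
  rw [Nat.cast_add, add_sub_cancel_right, mul_assoc] at hWtop
  have hunit : ‖(m : k) * (f.coeff (m + s) * g.coeff s)‖ = ‖(m : k)‖ := by
    rw [norm_mul, norm_mul, hftop, hgtop, mul_one, mul_one]
  exact hunit ▸ IsUltrametricDist.norm_lt_of_norm_sub_lt (hW _) hWtop

/-- No critical point in the disk forces inseparable reduction.  Under the normalization
hypotheses expressing that `φ = f/g` fixes the Gauss point with directional multiplicity `m`
and surplus multiplicity `s` (with `m + s ≥ 2`, i.e. `φ` not injective on the open unit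
disk), if the Wronskian `W = f'·g − f·g'` has no root `x` with `|x| < 1`, then `|m| < 1`
in `k` (so the residue characteristic is positive and divides `m`) and every coefficient of
`W` has absolute value `< 1` (the reduction of the Wronskian vanishes, i.e. `φ` has
inseparable reduction at the Gauss point). -/
theorem no_critical_point_inseparable_reduction {k : Type*} [NontriviallyNormedField k]
    [IsAlgClosed k] [CompleteSpace k] [IsUltrametricDist k]
    (m s : ℕ) (hm : 1 ≤ m) (hms : 2 ≤ m + s) (f g : k[X])
    (hf1 : ∀ i, ‖f.coeff i‖ ≤ 1) (hg1 : ∀ j, ‖g.coeff j‖ ≤ 1)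
    (hfsmall : ∀ i < m + s, ‖f.coeff i‖ < 1) (hftop : ‖f.coeff (m + s)‖ = 1)
    (hgsmall : ∀ j < s, ‖g.coeff j‖ < 1) (hgtop : ‖g.coeff s‖ = 1)
    (hnoroot : ∀ x : k, ‖x‖ < 1 → ¬(derivative f * g - f * derivative g).IsRoot x) :
    ‖(m : k)‖ < 1 ∧ ∀ i, ‖(derivative f * g - f * derivative g).coeff i‖ < 1 :=
  no_critical_point_inseparable_reduction_general m s hms f g hf1 hg1 hfsmall hftop hgsmall hgtop
    hnoroot
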